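/- Let D : ℝᵐ → ℝ be a function, α* its maximizer, and suppose for all α ∈ ℝᵐ and η ∈ [0,1]: D(η α* + (1-η)α) ≥ η D(α*) + (1-η) D(α) + (γ η(1-η)/(2m)) ‖α* - α‖². Then for any ρ ≥ 0 and any α, sup_{α̂} [ D(α̂) - D(α) - (ρ/(2λm²)) ‖α̂ - α‖² ] ≥ (λmγ/(λmγ + ρ)) (D(α*) - D(α)), where λ, γ, m > 0. -/

import Mathlib

/-!
Move from `α` toward the maximizer: at `α̂ = η α* + (1 - η) α` strong concavity gains
`η (D α* - D α) + (γ η (1 - η) / 2m) ‖α* - α‖²`, while the penalty costs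
`(ρ / 2λm²) η² ‖α* - α‖²`. The choice `η = λmγ / (λmγ + ρ)` makes gain and cost of the
quadratic terms cancel exactly, leaving `η (D α* - D α)`.
-/

open Finset

theorem sum_sq_convexCombination_sub {ι : Type*} [Fintype ι] (η : ℝ) (a b : ι → ℝ) :
    ∑ i, (η * a i + (1 - η) * b i - b i) ^ 2 = η ^ 2 * ∑ i, (a i - b i) ^ 2 := by
  rw [mul_sum]
  exact sum_congr rfl fun i _ => by ring

theorem penalty_coeff_mul_sq_eq {lam γ m ρ : ℝ} (hlam : lam ≠ 0) (hm : m ≠ 0)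
    (hden : lam * m * γ + ρ ≠ 0) :
    ρ / (2 * lam * m ^ 2) * (lam * m * γ / (lam * m * γ + ρ)) ^ 2
      = γ * (lam * m * γ / (lam * m * γ + ρ)) * (1 - lam * m * γ / (lam * m * γ + ρ))
          / (2 * m) := by
  field_simp
  ring

/-- Strong concavity toward the maximizer yields the key lower bound on the
penalized suboptimality supremum. -/
theorem penalized_sup_lower_bound
    (n : ℕ) (lam γ m ρ : ℝ)
    (hlam : 0 < lam) (hγ : 0 < γ) (hm : 0 < m) (hρ : 0 ≤ ρ)
    (D : (Fin n → ℝ) → ℝ) (αstar : Fin n → ℝ)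
    (hmax : ∀ α, D α ≤ D αstar)
    (hsc : ∀ α : Fin n → ℝ, ∀ η : ℝ, 0 ≤ η → η ≤ 1 →
      D (fun i => η * αstar i + (1 - η) * α i)
        ≥ η * D αstar + (1 - η) * D α
          + (γ * η * (1 - η) / (2 * m)) * ∑ i, (αstar i - α i) ^ 2) :
    ∀ α : Fin n → ℝ,
      (lam * m * γ / (lam * m * γ + ρ)) * (D αstar - D α)
        ≤ ⨆ αhat : Fin n → ℝ,
            (D αhat - D α - (ρ / (2 * lam * m ^ 2)) * ∑ i, (αhat i - α i) ^ 2) := by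
  intro α
  have hden : 0 < lam * m * γ + ρ := by positivity
  have hcoeff := penalty_coeff_mul_sq_eq hlam.ne' hm.ne' hden.ne'
  set η := lam * m * γ / (lam * m * γ + ρ)
  have hη1 : η ≤ 1 := (div_le_one hden).2 (by linarith)
  have hbdd : BddAbove (Set.range fun αhat : Fin n → ℝ =>
      D αhat - D α - (ρ / (2 * lam * m ^ 2)) * ∑ i, (αhat i - α i) ^ 2) := by
    refine ⟨D αstar - D α, ?_⟩
    rintro _ ⟨β, rfl⟩
    have hpen : 0 ≤ ρ / (2 * lam * m ^ 2) * ∑ i, (β i - α i) ^ 2 := by positivity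
    linarith [hmax β]
  refine le_ciSup_of_le hbdd (fun i => η * αstar i + (1 - η) * α i) ?_
  rw [sum_sq_convexCombination_sub, ← mul_assoc, hcoeff]
  linarith [hsc α η (by positivity) hη1]
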